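/- arXiv:2110.04144 — 4 statements merged into one kernel-verified Lean document; each statement's English description precedes it below -/
import Mathlib

section
/- The complex function b(t) = (2-g²)/(2g²) + i√(1-g²) / (g² tan[√(1-g²) ωt - i·arctanh(2√(1-g²)/(2-g²))]) with 0 < g < 1 and ω > 0 satisfies the Riccati equation ḃ = -iω[-g²/4 + 2(1 - g²/2)b - g² b²] with initial condition b(0) = 0, and is periodic in t with period π/(ω√(1-g²)). -/
/-!
Completing the square, `-g²/4 + (2 - g²) b - g² b² = s²/g² - g² (b - b∞)²` with
`s = √(1-g²)` and `b∞ = (2-g²)/(2g²)`. The given `b` is `b∞ + (i s/g²) cot θ(t)` with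
`θ(t) = s ω t - i r`, `r = artanh(2s/(2-g²)) > 0`, and `cot' = -(1 + cot²)` turns this into the
Riccati equation. Since `Im θ = -r ≠ 0`, `θ` never meets a zero of `sin` or `cos`. At `t = 0`,
`tan(-i r) = -i tanh r = -2 i s/(2-g²)`, which makes `b 0` vanish, and the period comes from the
`π`-periodicity of `tan`.
-/

open Complex Real

/-- The inverse hyperbolic tangent, `artanh x = (1/2) log((1+x)/(1-x))`. -/
noncomputable def artanh (x : ℝ) : ℝ := (1/2) * Real.log ((1 + x) / (1 - x))

namespace Complex

lemma sin_ne_zero_of_im_ne_zero {z : ℂ} (hz : z.im ≠ 0) : sin z ≠ 0 := by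
  refine sin_ne_zero_iff.mpr fun k hk => hz ?_
  rw [hk]
  exact_mod_cast ofReal_im (k * π)

lemma cos_ne_zero_of_im_ne_zero {z : ℂ} (hz : z.im ≠ 0) : cos z ≠ 0 := by
  refine cos_ne_zero_iff.mpr fun k hk => hz ?_
  rw [hk]
  exact_mod_cast ofReal_im ((2 * k + 1) * π / 2)

lemma hasDerivAt_inv_tan {z : ℂ} (hs : sin z ≠ 0) (hc : cos z ≠ 0) :
    HasDerivAt (fun w => (tan w)⁻¹) (-(1 + (tan z)⁻¹ ^ 2)) z := by
  have htan : tan z ≠ 0 := by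
    rw [tan_eq_sin_div_cos]
    exact div_ne_zero hs hc
  refine ((hasDerivAt_tan hc).inv htan).congr_deriv ?_
  rw [tan_eq_sin_div_cos]
  field_simp
  linear_combination sin_sq_add_cos_sq z

end Complex

lemma hasDerivAt_add_mul_inv_tan (A B z₀ : ℂ) (a t : ℝ) (hB : B ≠ 0) (hz₀ : z₀.im ≠ 0) :
    HasDerivAt (fun t : ℝ => A + B * (tan ((a * t : ℝ) + z₀))⁻¹)
      (-(a / B) * (B ^ 2 + (A + B * (tan ((a * t : ℝ) + z₀))⁻¹ - A) ^ 2)) t := by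
  have him : ((a : ℂ) * t + z₀).im ≠ 0 := by simpa using hz₀
  have hcot := hasDerivAt_inv_tan (sin_ne_zero_of_im_ne_zero him) (cos_ne_zero_of_im_ne_zero him)
  have haff : HasDerivAt (fun w : ℂ => a * w + z₀) a t :=
    ((hasDerivAt_id (t : ℂ)).const_mul (a : ℂ)).add_const z₀ |>.congr_deriv (mul_one _)
  have := ((hcot.comp (t : ℂ) haff).const_mul B).const_add A |>.comp_ofReal
  convert this using 1
  · ext x; push_cast; rfl
  · push_cast; field_simp; ring

lemma periodic_add_mul_inv_tan (A B z₀ : ℂ) (a : ℝ) :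
    Function.Periodic (fun t : ℝ => A + B * (tan ((a * t : ℝ) + z₀))⁻¹) (π / a) := by
  have h : Function.Periodic (fun x : ℝ => A + B * (tan (x + z₀))⁻¹) π := fun x => by
    simp only [ofReal_add, add_right_comm _ (π : ℂ), Complex.tan_periodic _]
  simpa only [div_eq_inv_mul] using h.const_mul a

lemma quench_rhs_eq_sub_sq (g b : ℂ) (hg : g ≠ 0) :
    -g ^ 2 / 4 + 2 * (1 - g ^ 2 / 2) * b - g ^ 2 * b ^ 2 =
      (1 - g ^ 2) / g ^ 2 - g ^ 2 * (b - (2 - g ^ 2) / (2 * g ^ 2)) ^ 2 := by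
  field_simp
  ring

lemma cot_riccati_rhs_eq_quench_rhs (g s ω b : ℂ) (hg : g ≠ 0) (hs : s ≠ 0)
    (hs2 : s ^ 2 = 1 - g ^ 2) :
    -(s * ω / (I * s / g ^ 2)) * ((I * s / g ^ 2) ^ 2 + (b - (2 - g ^ 2) / (2 * g ^ 2)) ^ 2) =
      -(I * ω) * (-g ^ 2 / 4 + 2 * (1 - g ^ 2 / 2) * b - g ^ 2 * b ^ 2) := by
  rw [quench_rhs_eq_sub_sq g b hg, ← hs2]
  field_simp
  rw [I_sq]
  ring

lemma quench_add_mul_inv_neg_mul_I_eq_zero (g s : ℂ) (hg : g ≠ 0) (hs : s ≠ 0) :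
    (2 - g ^ 2) / (2 * g ^ 2) + I * s / g ^ 2 * (-(2 * s / (2 - g ^ 2) * I))⁻¹ = 0 := by
  field_simp
  ring

lemma artanh_eq_real_artanh {x : ℝ} (hx : x ∈ Set.Icc (-1) 1) :
    _root_.artanh x = Real.artanh x :=
  (Real.artanh_eq_half_log hx).symm

lemma two_mul_sqrt_one_sub_sq_div_mem_Ioo {g : ℝ} (hg0 : g ≠ 0) (hg1 : g ^ 2 < 1) :
    2 * √(1 - g ^ 2) / (2 - g ^ 2) ∈ Set.Ioo 0 1 := by
  have hs := Real.sq_sqrt (sub_nonneg.mpr hg1.le)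
  have hs0 := Real.sqrt_pos.mpr (sub_pos.mpr hg1)
  have hg4 : 0 < g ^ 4 := by positivity
  rw [Set.mem_Ioo, div_lt_one (by linarith)]
  exact ⟨div_pos (by positivity) (by linarith), by nlinarith⟩

theorem riccati_solution_quench_general (g ω : ℝ) (hg0 : 0 < g) (hg1 : g < 1)
    (b : ℝ → ℂ)
    (hb : ∀ t : ℝ, b t = ((2 - g^2) / (2 * g^2) : ℝ) +
      Complex.I * (Real.sqrt (1 - g^2) : ℝ) /
        ((g^2 : ℝ) * Complex.tan ((Real.sqrt (1 - g^2) * ω * t : ℝ)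
          - Complex.I * (_root_.artanh (2 * Real.sqrt (1 - g^2) / (2 - g^2)) : ℝ)))) :
    (∀ t : ℝ, HasDerivAt b
      (-(Complex.I * (ω : ℝ)) *
        (-(g^2 : ℝ)/4 + 2 * (1 - (g^2 : ℝ)/2) * b t - (g^2 : ℝ) * (b t)^2)) t) ∧
    b 0 = 0 ∧
    Function.Periodic b (Real.pi / (ω * Real.sqrt (1 - g^2))) := by
  have hg2 : g ^ 2 < 1 := by nlinarith
  have hc := two_mul_sqrt_one_sub_sq_div_mem_Ioo hg0.ne' hg2
  have hc' := Set.Ioo_subset_Ioo_left (by norm_num : (-1 : ℝ) ≤ 0) hc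
  rw [artanh_eq_real_artanh (Set.Ioo_subset_Icc_self hc')] at hb
  set s := √(1 - g ^ 2)
  set c := 2 * s / (2 - g ^ 2)
  have hs : (s : ℂ) ≠ 0 := by exact_mod_cast (Real.sqrt_pos.mpr (sub_pos.mpr hg2)).ne'
  have hs2 : (s : ℂ) ^ 2 = 1 - (g : ℂ) ^ 2 := by exact_mod_cast Real.sq_sqrt (sub_pos.mpr hg2).le
  have hgC : (g : ℂ) ≠ 0 := by exact_mod_cast hg0.ne'
  set A : ℂ := (((2 - g ^ 2) / (2 * g ^ 2) : ℝ) : ℂ)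
  set B : ℂ := I * s / (g ^ 2 : ℝ)
  have hb' : b = fun t : ℝ => A + B * (tan ((s * ω * t : ℝ) + -(I * Real.artanh c)))⁻¹ := by
    funext t; rw [hb t, ← sub_eq_add_neg]; ring
  refine ⟨fun t => ?_, ?_, ?_⟩
  · have hz₀ : (-(I * Real.artanh c)).im ≠ 0 := by simpa using (Real.artanh_pos hc).ne'
    have hbt : A + B * (tan ((s * ω * t : ℝ) + -(I * Real.artanh c)))⁻¹ = b t := by rw [hb']
    have hd := hasDerivAt_add_mul_inv_tan A B _ (s * ω) t (by simp [B, hs, hgC]) hz₀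
    rw [hbt, ← hb'] at hd
    convert hd using 1
    simp only [A, B]
    push_cast
    exact (cot_riccati_rhs_eq_quench_rhs g s ω (b t) hgC hs hs2).symm
  · have htan : tan (-(I * Real.artanh c)) = -(c * I) := by
      rw [Complex.tan_neg, mul_comm, tan_mul_I, ← ofReal_tanh, Real.tanh_artanh hc']
    simp only [hb', mul_zero, ofReal_zero, zero_add, htan, A, B, c]
    push_cast
    exact quench_add_mul_inv_neg_mul_I_eq_zero g s hgC hs
  · rw [hb', mul_comm ω]
    exact periodic_add_mul_inv_tan A B _ _

/-- The explicit function `b(t)` solves the Riccati equation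
`ḃ = -iω(-g²/4 + 2(1-g²/2)b - g²b²)` with `b(0) = 0`, and is periodic with period
`π/(ω√(1-g²))`. -/
theorem riccati_solution_quench (g ω : ℝ) (hg0 : 0 < g) (hg1 : g < 1) (hω : 0 < ω)
    (b : ℝ → ℂ)
    (hb : ∀ t : ℝ, b t = ((2 - g^2) / (2 * g^2) : ℝ) +
      Complex.I * (Real.sqrt (1 - g^2) : ℝ) /
        ((g^2 : ℝ) * Complex.tan ((Real.sqrt (1 - g^2) * ω * t : ℝ)
          - Complex.I * (_root_.artanh (2 * Real.sqrt (1 - g^2) / (2 - g^2)) : ℝ)))) :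
    (∀ t : ℝ, HasDerivAt b
      (-(Complex.I * (ω : ℝ)) *
        (-(g^2 : ℝ)/4 + 2 * (1 - (g^2 : ℝ)/2) * b t - (g^2 : ℝ) * (b t)^2)) t) ∧
    b 0 = 0 ∧
    Function.Periodic b (Real.pi / (ω * Real.sqrt (1 - g^2))) :=
  riccati_solution_quench_general g ω hg0 hg1 b hb
end

section
/- For 0 < g < 1, the solution b(t) of the Riccati equation ḃ = -iω[-g²/4 + 2(1-g²/2)b - g²b²], b(0) = 0, satisfies b(nτ) = 0 for every integer n ≥ 0 and b((n+1/2)τ) = g²/(2(2-g²)), where τ = π/(ω√(1-g²)); moreover the photon number N(t) = 4|b|²/(1-4|b|²) attains minimum 0 and maximum g⁴/(4(1-g²)) over each period. -/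
/-! With `a = artanh (2√(1-g²)/(2-g²))` one has `cosh a = (2-g²)/g²` and `sinh a = 2√(1-g²)/g²`,
so the addition formula `sin x = sin (x - ia) cosh a + i cos (x - ia) sinh a` turns the solution
into `b = sin x / (2 sin (x - ia))` with phase `x = √(1-g²) ω t`. As
`|sin (x - ia)|² = sin² x + sinh² a`, the photon number is `N = sin² x / sinh² a`: it vanishes at
`x = nπ` and is maximal where `cos x = 0`, where also `b = 1 / (2 cosh a)`. -/

open Complex Real

namespace Complex

theorem cos_add_sin_div_tan {z : ℂ} (hz : sin z ≠ 0) (w : ℂ) :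
    cos w + sin w / tan z = sin (z + w) / sin z := by
  rw [tan_eq_sin_div_cos, div_div_eq_mul_div, sin_add]
  field_simp

theorem sin_sub_I_mul (x a : ℝ) :
    sin (x - I * a) = Real.sin x * Real.cosh a - Real.cos x * Real.sinh a * I := by
  have h := sin_add_mul_I x (-a)
  rw [cosh_neg, sinh_neg] at h
  rw [show (x : ℂ) - I * a = x + -a * I by ring, h]
  push_cast
  ring

theorem normSq_sin_sub_I_mul (x a : ℝ) :
    normSq (sin (x - I * a)) = Real.sin x ^ 2 + Real.sinh a ^ 2 := by
  rw [sin_sub_I_mul, sub_eq_add_neg, ← neg_mul, ← ofReal_mul, ← ofReal_mul, ← ofReal_neg,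
    normSq_add_mul_I]
  linear_combination Real.sinh a ^ 2 * Real.sin_sq_add_cos_sq x
    + Real.sin x ^ 2 * Real.cosh_sq a

theorem sin_sub_I_mul_ne_zero {a : ℝ} (ha : a ≠ 0) (x : ℝ) : sin (x - I * a) ≠ 0 := by
  rw [← normSq_pos, normSq_sin_sub_I_mul]
  have : Real.sinh a ≠ 0 := Real.sinh_ne_zero.mpr ha
  positivity

theorem cosh_add_I_mul_sinh_div_tan {a : ℝ} (ha : a ≠ 0) (x : ℝ) :
    (Real.cosh a : ℂ) + I * Real.sinh a / tan (x - I * a) = Real.sin x / sin (x - I * a) := by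
  have h := cos_add_sin_div_tan (sin_sub_I_mul_ne_zero ha x) (a * I)
  rw [cos_mul_I, sin_mul_I, show (x : ℂ) - I * a + a * I = x by ring] at h
  push_cast
  rw [← h]
  ring

end Complex

theorem photonNumber_eq (a x : ℝ) (ha : a ≠ 0) :
    4 * ‖(Real.sin x : ℂ) / (2 * sin (x - I * a))‖ ^ 2 /
        (1 - 4 * ‖(Real.sin x : ℂ) / (2 * sin (x - I * a))‖ ^ 2) =
      Real.sin x ^ 2 / Real.sinh a ^ 2 := by
  have hsinh : Real.sinh a ≠ 0 := Real.sinh_ne_zero.mpr ha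
  have hnorm : 4 * ‖(Real.sin x : ℂ) / (2 * sin (x - I * a))‖ ^ 2 =
      Real.sin x ^ 2 / (Real.sin x ^ 2 + Real.sinh a ^ 2) := by
    rw [Complex.sq_norm, normSq_div, normSq_mul, normSq_sin_sub_I_mul, normSq_ofReal,
      normSq_ofNat]
    field_simp
    ring
  rw [hnorm]
  field_simp
  ring

theorem sin_div_two_sin_sub_I_mul_of_cos_eq_zero (a : ℝ) {x : ℝ} (hx : Real.cos x = 0) :
    (Real.sin x : ℂ) / (2 * sin (x - I * a)) = (1 / (2 * Real.cosh a) : ℝ) := by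
  have hsin : (Real.sin x : ℂ) ≠ 0 := by
    rw [ofReal_ne_zero]
    intro h
    simpa [h, hx] using Real.sin_sq_add_cos_sq x
  have hcosh : (Real.cosh a : ℂ) ≠ 0 := ofReal_ne_zero.mpr (Real.cosh_pos a).ne'
  rw [sin_sub_I_mul, hx, ofReal_zero, zero_mul, zero_mul, sub_zero, ofReal_div, ofReal_one,
    ofReal_mul, ofReal_ofNat]
  field_simp

theorem Real.cos_nat_add_half_mul_pi (n : ℕ) : Real.cos ((n + 1 / 2) * π) = 0 := by
  rw [show ((n : ℝ) + 1 / 2) * π = π / 2 + n * π by ring, Real.cos_add_nat_mul_pi,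
    Real.cos_pi_div_two, mul_zero]

noncomputable def quenchAngle (g : ℝ) : ℝ := _root_.artanh (2 * √(1 - g ^ 2) / (2 - g ^ 2))

theorem cosh_and_sinh_quenchAngle {g : ℝ} (hg0 : 0 < g) (hg1 : g < 1) :
    Real.cosh (quenchAngle g) = (2 - g ^ 2) / g ^ 2 ∧
      Real.sinh (quenchAngle g) = 2 * √(1 - g ^ 2) / g ^ 2 := by
  set u := 2 * √(1 - g ^ 2) / (2 - g ^ 2) with hu_def
  have hs : √(1 - g ^ 2) ^ 2 = 1 - g ^ 2 := Real.sq_sqrt (by nlinarith)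
  have hg2 : 0 < 2 - g ^ 2 := by nlinarith
  have hu : u ∈ Set.Ioo (-1) 1 := by
    constructor
    · have : 0 ≤ u := by positivity
      linarith
    · rw [div_lt_one hg2]
      nlinarith [pow_pos hg0 4]
  have hroot : √(1 - u ^ 2) = g ^ 2 / (2 - g ^ 2) := by
    rw [Real.sqrt_eq_iff_mul_self_eq_of_pos (by positivity)]
    simp only [u]
    field_simp
    linear_combination 4 * hs
  have hangle : quenchAngle g = Real.artanh u :=
    (Real.artanh_eq_half_log (Set.Ioo_subset_Icc_self hu)).symm
  rw [hangle, Real.cosh_artanh hu, Real.sinh_artanh hu, hroot]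
  constructor
  · field_simp
  · rw [hu_def]
    field_simp

theorem quenchAngle_ne_zero {g : ℝ} (hg0 : 0 < g) (hg1 : g < 1) : quenchAngle g ≠ 0 := by
  rw [← Real.sinh_ne_zero, (cosh_and_sinh_quenchAngle hg0 hg1).2]
  have : 0 < √(1 - g ^ 2) := Real.sqrt_pos.mpr (by nlinarith)
  positivity

theorem quench_amplitude_eq {g : ℝ} (hg0 : 0 < g) (hg1 : g < 1) (x : ℝ) :
    (((2 - g ^ 2) / (2 * g ^ 2) : ℝ) : ℂ) +
        I * (√(1 - g ^ 2) : ℝ) / ((g ^ 2 : ℝ) * tan (x - I * quenchAngle g)) =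
      Real.sin x / (2 * sin (x - I * quenchAngle g)) := by
  obtain ⟨hcosh, hsinh⟩ := cosh_and_sinh_quenchAngle hg0 hg1
  calc _ = ((Real.cosh (quenchAngle g) : ℂ) +
        I * Real.sinh (quenchAngle g) / tan (x - I * quenchAngle g)) / 2 := by
        rw [hcosh, hsinh]
        push_cast
        ring
    _ = _ := by
        rw [cosh_add_I_mul_sinh_div_tan (quenchAngle_ne_zero hg0 hg1)]
        ring

/-- For the post-quench squeezing `b(t)` with period `τ = π/(ω√(1-g²))`:
`b(nτ) = 0`, `b((n+1/2)τ) = g²/(2(2-g²))`, and the photon number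
`N = 4|b|²/(1-4|b|²)` stays in `[0, g⁴/(4(1-g²))]`, attaining both extremes. -/
theorem quench_periodic_extrema (g ω : ℝ) (hg0 : 0 < g) (hg1 : g < 1) (hω : 0 < ω)
    (b : ℝ → ℂ) (N : ℝ → ℝ) (τ : ℝ)
    (hτ : τ = Real.pi / (ω * Real.sqrt (1 - g^2)))
    (hb : ∀ t : ℝ, b t = ((2 - g^2) / (2 * g^2) : ℝ) +
      Complex.I * (Real.sqrt (1 - g^2) : ℝ) /
        ((g^2 : ℝ) * Complex.tan ((Real.sqrt (1 - g^2) * ω * t : ℝ)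
          - Complex.I * (_root_.artanh (2 * Real.sqrt (1 - g^2) / (2 - g^2)) : ℝ))))
    (hN : ∀ t : ℝ, N t = 4 * ‖b t‖ ^ 2 / (1 - 4 * ‖b t‖ ^ 2)) :
    (∀ n : ℕ, b (n * τ) = 0) ∧
    (∀ n : ℕ, b ((n + 1/2) * τ) = (g^2 / (2 * (2 - g^2)) : ℝ)) ∧
    (∀ t : ℝ, 0 ≤ N t ∧ N t ≤ g^4 / (4 * (1 - g^2))) ∧
    (∀ n : ℕ, N (n * τ) = 0 ∧ N ((n + 1/2) * τ) = g^4 / (4 * (1 - g^2))) := by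
  set a := quenchAngle g
  set phase : ℝ → ℝ := fun t ↦ √(1 - g ^ 2) * ω * t
  obtain ⟨hcosh, hsinh⟩ := cosh_and_sinh_quenchAngle hg0 hg1
  have hs : 0 < √(1 - g ^ 2) := Real.sqrt_pos.mpr (by nlinarith)
  have hb' (t : ℝ) : b t = Real.sin (phase t) / (2 * sin (phase t - I * a)) :=
    (hb t).trans (quench_amplitude_eq hg0 hg1 _)
  have hN' (t : ℝ) : N t = Real.sin (phase t) ^ 2 / Real.sinh a ^ 2 := by
    rw [hN, hb', photonNumber_eq _ _ (quenchAngle_ne_zero hg0 hg1)]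
  have hphase (y : ℝ) : phase (y * τ) = y * π := by
    simp only [phase, hτ]
    field_simp
  have hhalf (n : ℕ) : Real.cos (phase ((n + 1 / 2) * τ)) = 0 := by
    rw [hphase, Real.cos_nat_add_half_mul_pi]
  have hhalf_sin (n : ℕ) : Real.sin (phase ((n + 1 / 2) * τ)) ^ 2 = 1 := by
    rw [Real.sin_sq, hhalf n]
    ring
  have hmax : 1 / Real.sinh a ^ 2 = g ^ 4 / (4 * (1 - g ^ 2)) := by
    rw [hsinh, div_pow, mul_pow, Real.sq_sqrt (by nlinarith)]
    field_simp
    norm_num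
  refine ⟨fun n ↦ ?_, fun n ↦ ?_, fun t ↦ ⟨?_, ?_⟩, fun n ↦ ⟨?_, ?_⟩⟩
  · rw [hb', hphase, Real.sin_nat_mul_pi, ofReal_zero, zero_div]
  · rw [hb', sin_div_two_sin_sub_I_mul_of_cos_eq_zero _ (hhalf n), hcosh]
    congr 1
    field_simp
  · rw [hN']
    positivity
  · rw [hN', ← hmax]
    gcongr
    exact Real.sin_sq_le_one _
  · rw [hN', hphase, Real.sin_nat_mul_pi]
    simp
  · rw [hN', hhalf_sin, hmax]
end

section
/- Let X, Y, s, A₁, A₂, b, c, χ, φ be reals with X, Y ≥ 0, XY ≥ 1/4, s := b² + c² and the eigenvalue relations χ+φ = A₁+A₂, χφ = A₁A₂ - s. Then the quantity V = 2(A₁²X² + A₂²Y²) + 4XYb² - A₁A₂ + b² satisfies V ≤ 2(φ²+χ²)[(X+Y)² - 1/2]. -/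
/-!
After eliminating the eigenvalues, `φ² + χ² = A₁² + A₂² + 2(b² + c²)`, the difference of the two
sides is a sum of terms that are nonnegative by `XY ≥ 1/4`: the `A₁²` and `A₂²` terms lose
only `2XY - 1/2 ≥ 0` against `(X + Y)² - 1/2`, the `b²` and `c²` terms are controlled by
`X² + XY + Y² ≥ 3/4` and `(X + Y)² ≥ 1`, and the indefinite term `-A₁A₂` is absorbed by
`2(A₁Y)² + 2(A₂X)² ≥ 4|A₁A₂|XY ≥ |A₁A₂|`.
-/

theorem sq_add_sq_eq_of_add_eq_of_mul_eq {R : Type*} [CommRing R] {χ φ p q : R}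
    (hsum : χ + φ = p) (hprod : χ * φ = q) : φ ^ 2 + χ ^ 2 = p ^ 2 - 2 * q := by
  rw [← hsum, ← hprod]
  ring

section Heisenberg

variable {x y : ℝ}

theorem one_le_sq_add_of_quarter_le_mul (h : 1 / 4 ≤ x * y) : 1 ≤ (x + y) ^ 2 := by
  nlinarith [sq_nonneg (x - y)]

theorem three_quarters_le_sq_add_mul_add_sq (h : 1 / 4 ≤ x * y) :
    3 / 4 ≤ x ^ 2 + x * y + y ^ 2 := by
  nlinarith [sq_nonneg (x - y)]

theorem neg_mul_le_two_mul_sq_add_two_mul_sq (h : 1 / 4 ≤ x * y) (a b : ℝ) :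
    -(a * b) ≤ 2 * (a * y) ^ 2 + 2 * (b * x) ^ 2 := by
  have hxy : 0 < x * y := by linarith
  have amgm : 4 * |a * b| * (x * y) ≤ 2 * (a * y) ^ 2 + 2 * (b * x) ^ 2 := by
    rcases abs_cases (a * b) with ⟨hab, -⟩ | ⟨hab, -⟩ <;> rw [hab] <;>
      nlinarith [sq_nonneg (a * y - b * x), sq_nonneg (a * y + b * x)]
  calc -(a * b) ≤ |a * b| := neg_le_abs _
    _ ≤ 4 * |a * b| * (x * y) := by nlinarith [abs_nonneg (a * b)]
    _ ≤ _ := amgm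

end Heisenberg

theorem gaussian_qfi_variance_bound_general (X Y s A₁ A₂ b c χ φ : ℝ)
    (hXY : 1/4 ≤ X * Y)
    (hs : s = b^2 + c^2)
    (hsum : χ + φ = A₁ + A₂)
    (hprod : χ * φ = A₁ * A₂ - s) :
    2 * (A₁^2 * X^2 + A₂^2 * Y^2) + 4 * X * Y * b^2 - A₁ * A₂ + b^2
      ≤ 2 * (φ^2 + χ^2) * ((X + Y)^2 - 1/2) := by
  have hS : φ ^ 2 + χ ^ 2 = A₁ ^ 2 + A₂ ^ 2 + 2 * (b ^ 2 + c ^ 2) := by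
    rw [sq_add_sq_eq_of_add_eq_of_mul_eq hsum hprod, hs]
    ring
  rw [hS]
  linear_combination 4 * (A₁ ^ 2 + A₂ ^ 2) * hXY
    + neg_mul_le_two_mul_sq_add_two_mul_sq hXY A₁ A₂
    + 4 * b ^ 2 * three_quarters_le_sq_add_mul_add_sq hXY
    + 4 * c ^ 2 * one_le_sq_add_of_quarter_le_mul hXY + 2 * sq_nonneg c

/-- Central inequality of the Gaussian QFI bound: with quadrature variances
`X, Y ≥ 0`, `XY ≥ 1/4` (Heisenberg), `s = b²+c²`, and eigenvalue relations
`χ+φ = A₁+A₂`, `χφ = A₁A₂-s`, the variance expression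
`V = 2(A₁²X² + A₂²Y²) + 4XYb² - A₁A₂ + b²` obeys `V ≤ 2(φ²+χ²)[(X+Y)² - 1/2]`. -/
theorem gaussian_qfi_variance_bound (X Y s A₁ A₂ b c χ φ : ℝ)
    (hX : 0 ≤ X) (hY : 0 ≤ Y) (hXY : 1/4 ≤ X * Y)
    (hs : s = b^2 + c^2)
    (hsum : χ + φ = A₁ + A₂)
    (hprod : χ * φ = A₁ * A₂ - s) :
    2 * (A₁^2 * X^2 + A₂^2 * Y^2) + 4 * X * Y * b^2 - A₁ * A₂ + b^2
      ≤ 2 * (φ^2 + χ^2) * ((X + Y)^2 - 1/2) :=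
  gaussian_qfi_variance_bound_general X Y s A₁ A₂ b c χ φ hXY hs hsum hprod
end

section
/- Let b(t) = (ωt)/(2(ωt-2i)) and set g = 2λ/√(ωΩ) = 1. Then the partial derivatives of b with respect to the effective parameters satisfy, in the limit ωT → ∞: g·∂b/∂g ~ iωT, ω·∂b/∂ω ~ -i/(ωT), and 1-4|b|² ~ 4/(ωT)². Consequently Q_g⁰ := 8|g ∂_g b|²/(1-4|b|²)² ~ (ωT)⁶/2 and Q_ω⁰ := 8|ω ∂_ω b|²/(1-4|b|²)² ~ (ωT)²/2. -/
open Filter Complex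

/-!
Everything is a rational function of `s = ωT`. Substituting `u = 1/s`, the normalised quantities
`g∂_g b / (is)`, `s · ω∂_ω b` and `s² (1 - 4|b|²)` become functions of `u` that are continuous at
`u = 0` with values `1`, `-i` and `4`, which gives the first three limits. Writing
`Q_g⁰ / s⁶ = 8 |g∂_g b / (is)|² / (s² (1 - 4|b|²))²` and `Q_ω⁰ / s² = 8 |s · ω∂_ω b|² / (s² (1 - 4|b|²))²`,
both tend to `8 / 4² = 1/2`.
-/

theorem Filter.tendsto_atTop_of_eq_comp_inv {E : Type*} [TopologicalSpace E] {F f : ℝ → E} {a : E}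
    (hf : ContinuousAt f 0) (ha : f 0 = a) (hF : ∀ s ≠ 0, F s = f s⁻¹) :
    Tendsto F atTop (nhds a) :=
  ha ▸ (hf.tendsto.comp tendsto_inv_atTop_zero).congr' <|
    (eventually_ne_atTop 0).mono fun s hs => (hF s hs).symm

namespace Complex

lemma ofReal_sub_two_mul_I_ne_zero (s : ℝ) : (s : ℂ) - 2 * I ≠ 0 := by
  intro h
  simpa using congrArg im h

lemma sq_norm_ofReal_sub_two_mul_I (s : ℝ) : ‖(s : ℂ) - 2 * I‖ ^ 2 = s ^ 2 + 4 := by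
  rw [Complex.sq_norm, normSq_apply]
  simp only [sub_re, ofReal_re, mul_re, sub_im, ofReal_im, mul_im, re_ofNat, im_ofNat, I_re, I_im]
  ring

lemma one_sub_four_mul_sq_norm_div (s : ℝ) :
    1 - 4 * ‖(s : ℂ) / (2 * ((s : ℂ) - 2 * I))‖ ^ 2 = 4 / (s ^ 2 + 4) := by
  rw [norm_div, norm_mul, div_pow, mul_pow, sq_norm_ofReal_sub_two_mul_I, norm_real,
    Real.norm_eq_abs, sq_abs, Complex.norm_ofNat]
  field_simp
  ring

lemma norm_div_pow_six_eq (D : ℂ) (N s : ℝ) :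
    8 * ‖D‖ ^ 2 / N ^ 2 / s ^ 6 = 8 * ‖D / (I * s)‖ ^ 2 / (s ^ 2 * N) ^ 2 := by
  rw [norm_div, norm_mul, norm_I, norm_real, Real.norm_eq_abs, one_mul, div_pow, sq_abs]
  ring

lemma norm_div_sq_eq (D : ℂ) (N s : ℝ) :
    8 * ‖D‖ ^ 2 / N ^ 2 / s ^ 2 = 8 * ‖s * D‖ ^ 2 / (s ^ 2 * N) ^ 2 := by
  rw [norm_mul, norm_real, Real.norm_eq_abs, mul_pow, sq_abs]
  rcases eq_or_ne s 0 with rfl | hs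
  · simp
  · field_simp

end Complex

lemma quench_gDeriv_div_I_mul_eq {s : ℝ} (hs : s ≠ 0) :
    (-2 + I * ((s : ℂ) - 2 * I) + 2 * I * (4 * I - (s : ℂ)) / ((s : ℂ) - 2 * I) ^ 2) / (I * s) =
      1 + 2 * ((s⁻¹ : ℝ) : ℂ) ^ 2 * (4 * I * (s⁻¹ : ℝ) - 1) / (1 - 2 * I * (s⁻¹ : ℝ)) ^ 2 := by
  have h : (s : ℂ) - I * 2 ≠ 0 := by rw [mul_comm]; exact ofReal_sub_two_mul_I_ne_zero s
  have hs' : (s : ℂ) ≠ 0 := by exact_mod_cast hs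
  push_cast
  field_simp
  ring_nf
  simp only [I_sq]
  ring

lemma mul_quench_ωDeriv_eq {s : ℝ} (hs : s ≠ 0) :
    (s : ℂ) * (-I * s / ((s : ℂ) - 2 * I) ^ 2) = -I / (1 - 2 * I * (s⁻¹ : ℝ)) ^ 2 := by
  have h := ofReal_sub_two_mul_I_ne_zero s
  have hs' : (s : ℂ) ≠ 0 := by exact_mod_cast hs
  push_cast
  field_simp

/-- Asymptotics of the post-quench sensitivities at the critical point `g = 1`, with
`s = ωT`: for the exact expressions
`g∂_g b = -2 + i(s-2i) + 2i(4i-s)/(s-2i)²`, `ω∂_ω b = -is/(s-2i)²`,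
`1-4|b|² = 4/(s²+4)` (with `b = s/(2(s-2i))`), one has as `s → ∞`:
`g∂_g b ~ is`, `ω∂_ω b ~ -i/s`, `1-4|b|² ~ 4/s²`, and consequently
`Q_g⁰ = 8|g∂_g b|²/(1-4|b|²)² ~ s⁶/2` and `Q_ω⁰ = 8|ω∂_ω b|²/(1-4|b|²)² ~ s²/2`. -/
theorem quench_qfi_asymptotics
    (b Dg Dw : ℝ → ℂ) (Qg Qw : ℝ → ℝ)
    (hb : ∀ s : ℝ, b s = (s : ℂ) / (2 * ((s : ℂ) - 2 * Complex.I)))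
    (hDg : ∀ s : ℝ, Dg s = -2 + Complex.I * ((s : ℂ) - 2 * Complex.I)
      + 2 * Complex.I * (4 * Complex.I - (s : ℂ)) / ((s : ℂ) - 2 * Complex.I)^2)
    (hDw : ∀ s : ℝ, Dw s = -Complex.I * (s : ℂ) / ((s : ℂ) - 2 * Complex.I)^2)
    (hQg : ∀ s : ℝ, Qg s = 8 * ‖Dg s‖ ^ 2 / (1 - 4 * ‖b s‖ ^ 2)^2)
    (hQw : ∀ s : ℝ, Qw s = 8 * ‖Dw s‖ ^ 2 / (1 - 4 * ‖b s‖ ^ 2)^2) :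
    (∀ s : ℝ, 1 - 4 * ‖b s‖ ^ 2 = 4 / (s^2 + 4)) ∧
    Tendsto (fun s : ℝ => Dg s / (Complex.I * (s : ℂ))) atTop (nhds 1) ∧
    Tendsto (fun s : ℝ => (s : ℂ) * Dw s) atTop (nhds (-Complex.I)) ∧
    Tendsto (fun s : ℝ => s^2 * (1 - 4 * ‖b s‖ ^ 2)) atTop (nhds 4) ∧
    Tendsto (fun s : ℝ => Qg s / s^6) atTop (nhds (1/2)) ∧
    Tendsto (fun s : ℝ => Qw s / s^2) atTop (nhds (1/2)) := by
  have hN (s : ℝ) : 1 - 4 * ‖b s‖ ^ 2 = 4 / (s ^ 2 + 4) := by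
    rw [hb]; exact one_sub_four_mul_sq_norm_div s
  have hG : Tendsto (fun s : ℝ => Dg s / (I * s)) atTop (nhds 1) :=
    tendsto_atTop_of_eq_comp_inv
      (f := fun u : ℝ => 1 + 2 * (u : ℂ) ^ 2 * (4 * I * u - 1) / (1 - 2 * I * u) ^ 2)
      (by fun_prop (disch := norm_num)) (by norm_num)
      fun s hs => by rw [hDg]; exact quench_gDeriv_div_I_mul_eq hs
  have hW : Tendsto (fun s : ℝ => s * Dw s) atTop (nhds (-I)) :=
    tendsto_atTop_of_eq_comp_inv (f := fun u : ℝ => -I / (1 - 2 * I * u) ^ 2)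
      (by fun_prop (disch := norm_num)) (by norm_num)
      fun s hs => by rw [hDw]; exact mul_quench_ωDeriv_eq hs
  have hR : Tendsto (fun s : ℝ => s ^ 2 * (1 - 4 * ‖b s‖ ^ 2)) atTop (nhds 4) :=
    tendsto_atTop_of_eq_comp_inv (f := fun u : ℝ => 4 / (1 + 4 * u ^ 2))
      (by fun_prop (disch := positivity)) (by norm_num) fun s hs => by rw [hN]; field_simp
  refine ⟨hN, hG, hW, hR, ?_, ?_⟩
  · convert ((hG.norm.pow 2).const_mul 8).div (hR.pow 2) (by norm_num) using 2 with s
    · rw [hQg, Pi.div_apply, norm_div_pow_six_eq]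
    · norm_num
  · convert ((hW.norm.pow 2).const_mul 8).div (hR.pow 2) (by norm_num) using 2 with s
    · rw [hQw, Pi.div_apply, norm_div_sq_eq]
    · norm_num
end
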